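/- arXiv:1706.03175 — 2 statements merged into one kernel-verified Lean document; each statement's English description precedes it below -/
import Mathlib

section
/- With the notation of the orthogonal-case decomposition: writing A = (β_2−β_0)‖diag(P)‖² + β_0‖P‖_F², B_1 = 2(α_0α_2−α_0²)(diag(P)^⊤P·1 − ‖diag(P)‖²), B_2 = α_1²((diag(P)^⊤1)² − 2‖diag(P)‖² + ⟨P, P^⊤⟩), B_3 = α_0²(‖P·1‖² − ‖P‖_F²), one has the identity A + B_1 + B_2 + B_3 = ‖α_0 P·1 + (α_2−α_0)diag(P)‖² + α_1²(diag(P)^⊤1)² + (α_1²/2)‖P + P^⊤ − 2 diag(diag(P))‖_F² + (β_0−α_0²−α_1²)‖P − diag(diag(P))‖_F² + (β_2−α_1²−α_2²)‖diag(P)‖². -/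
open MeasureTheory ProbabilityTheory Real

noncomputable def euclNorm {ι : Type*} [Fintype ι] (v : ι → ℝ) : ℝ :=
  Real.sqrt (∑ i, (v i)^2)

noncomputable def specNorm {ι κ : Type*} [Fintype ι] [Fintype κ] (A : Matrix ι κ ℝ) : ℝ :=
  sSup {r : ℝ | ∃ x : κ → ℝ, euclNorm x = 1 ∧ r = euclNorm (A.mulVec x)}

noncomputable def sigmaMin {ι κ : Type*} [Fintype ι] [Fintype κ] (A : Matrix ι κ ℝ) : ℝ :=
  sInf {r : ℝ | ∃ x : κ → ℝ, euclNorm x = 1 ∧ r = euclNorm (A.mulVec x)}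

noncomputable def frobNorm {ι κ : Type*} [Fintype ι] [Fintype κ] (A : Matrix ι κ ℝ) : ℝ :=
  Real.sqrt (∑ i, ∑ j, (A i j)^2)

noncomputable def stdGaussian (d : ℕ) : Measure (Fin d → ℝ) :=
  Measure.pi fun _ => gaussianReal 0 1

/-! Expanding the squares, both sides become linear combinations of `‖P·1‖²`, `⟨diag P, P·1⟩`,
`‖diag P‖²`, `‖P‖_F²`, `⟨P, Pᵀ⟩` and `(tr P)²` with coefficients polynomial in the scalars, and
the identity reduces to a polynomial identity in those coefficients. -/

section SumIdentities

variable {ι : Type*} [Fintype ι]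

theorem sum_mul_add_mul_sq (x y : ι → ℝ) (a b : ℝ) :
    ∑ i, (a * x i + b * y i) ^ 2
      = a ^ 2 * ∑ i, x i ^ 2 + 2 * a * b * ∑ i, y i * x i + b ^ 2 * ∑ i, y i ^ 2 := by
  simp only [Finset.mul_sum, ← Finset.sum_add_distrib]
  exact Finset.sum_congr rfl fun i _ => by ring

variable [DecidableEq ι]

theorem sum_sq_offDiag (P : Matrix ι ι ℝ) :
    ∑ i, ∑ j, (if i = j then 0 else P i j) ^ 2 = ∑ i, ∑ j, P i j ^ 2 - ∑ i, P i i ^ 2 := by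
  have hsummand : ∀ i j, (if i = j then 0 else P i j) ^ 2
      = P i j ^ 2 - if i = j then P i j ^ 2 else 0 := by
    intro i j; split_ifs <;> ring
  simp only [hsummand, Finset.sum_sub_distrib, Finset.sum_ite_eq, Finset.mem_univ, if_true]

theorem sum_sq_add_transpose_sub_diag (P : Matrix ι ι ℝ) :
    ∑ i, ∑ j, (P i j + P j i - if i = j then 2 * P i i else 0) ^ 2
      = 2 * ∑ i, ∑ j, P i j ^ 2 + 2 * ∑ i, ∑ j, P i j * P j i - 4 * ∑ i, P i i ^ 2 := by
  have hsummand : ∀ i j, (P i j + P j i - if i = j then 2 * P i i else 0) ^ 2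
      = P i j ^ 2 + 2 * (P i j * P j i) + P j i ^ 2 - if i = j then 4 * P i i ^ 2 else 0 := by
    intro i j
    split_ifs with h
    · subst h; ring
    · ring
  simp only [hsummand, Finset.sum_sub_distrib, Finset.sum_add_distrib, Finset.sum_ite_eq,
    Finset.mem_univ, if_true, ← Finset.mul_sum]
  rw [Finset.sum_comm (f := fun i j => P j i ^ 2)]
  ring

end SumIdentities

/-- Exact algebraic identity `A + B₁ + B₂ + B₃ = C₁ + C₂ + C₃ + C₄ + C₅` used in the
orthogonal-case Hessian decomposition. -/
theorem stmt10 (k : ℕ) (P : Matrix (Fin k) (Fin k) ℝ) (α0 α1 α2 β0 β2 : ℝ) :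
    ((β2 - β0) * (∑ i, (P i i) ^ 2) + β0 * (∑ i, ∑ j, (P i j) ^ 2))
    + (2 * (α0 * α2 - α0 ^ 2) * ((∑ i, P i i * (∑ j, P i j)) - ∑ i, (P i i) ^ 2))
    + (α1 ^ 2 * ((∑ i, P i i) ^ 2 - 2 * (∑ i, (P i i) ^ 2) + ∑ i, ∑ j, P i j * P j i))
    + (α0 ^ 2 * ((∑ i, (∑ j, P i j) ^ 2) - ∑ i, ∑ j, (P i j) ^ 2))
    =
    (∑ i, (α0 * (∑ j, P i j) + (α2 - α0) * P i i) ^ 2)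
    + α1 ^ 2 * (∑ i, P i i) ^ 2
    + (α1 ^ 2 / 2) * (∑ i, ∑ j, (P i j + P j i - (if i = j then 2 * P i i else 0)) ^ 2)
    + (β0 - α0 ^ 2 - α1 ^ 2) * (∑ i, ∑ j, (if i = j then 0 else P i j) ^ 2)
    + (β2 - α1 ^ 2 - α2 ^ 2) * (∑ i, (P i i) ^ 2) := by
  rw [sum_mul_add_mul_sq, sum_sq_add_transpose_sub_diag, sum_sq_offDiag]
  ring
end

section
/- Schur-product lower bound for the tensorized Gram matrix: Let U ∈ R^{k×k} and let A ∈ R^{k²×k} be the matrix whose i-th column is vec(u_i u_i^⊤) where u_i is the i-th column of U. Then σ_k(A) ≥ σ_k(U)² and ‖A‖ ≤ σ_1(U)². -/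
open MeasureTheory ProbabilityTheory Real

/-! Reshape `A x` into the `k × k` matrix `U diag(x) Uᵀ`. Its `j`-th column is `U (x ∘ uʲ)`, where
`uʲ` is the `j`-th row of `U`, so `‖A x‖² = ∑ⱼ ‖U (x ∘ uʲ)‖²` lies between `σ_k(U)²` and `σ_1(U)²`
times `∑ⱼ ‖x ∘ uʲ‖² = ∑ₗ xₗ² ‖uₗ‖²`. Each column norm `‖uₗ‖` lies between `σ_k(U)` and `σ_1(U)`
as well, which gives `σ_k(U)⁴ ‖x‖² ≤ ‖A x‖² ≤ σ_1(U)⁴ ‖x‖²`. -/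

open Matrix

section Norms

variable {ι κ : Type*} [Fintype ι] [Fintype κ]

lemma euclNorm_eq_norm_toLp (v : ι → ℝ) :
    euclNorm v = ‖(WithLp.toLp 2 v : EuclideanSpace ℝ ι)‖ := by
  simp [euclNorm, EuclideanSpace.norm_eq]

lemma euclNorm_nonneg (v : ι → ℝ) : 0 ≤ euclNorm v :=
  Real.sqrt_nonneg _

lemma euclNorm_sq (v : ι → ℝ) : euclNorm v ^ 2 = ∑ i, v i ^ 2 :=
  Real.sq_sqrt (Finset.sum_nonneg fun _ _ => sq_nonneg _)

lemma euclNorm_smul (c : ℝ) (v : ι → ℝ) : euclNorm (c • v) = |c| * euclNorm v := by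
  rw [euclNorm_eq_norm_toLp, WithLp.toLp_smul, norm_smul, ← euclNorm_eq_norm_toLp, Real.norm_eq_abs]

lemma euclNorm_single [DecidableEq ι] (j : ι) : euclNorm (Pi.single j 1 : ι → ℝ) = 1 := by
  rw [euclNorm, Finset.sum_eq_single j] <;> simp_all

lemma euclNorm_ne_one_of_isEmpty [IsEmpty ι] (v : ι → ℝ) : euclNorm v ≠ 1 := by
  simp [euclNorm]

lemma exists_euclNorm_eq_one_mulVec_eq (M : Matrix ι κ ℝ) {v : κ → ℝ} (hv : v ≠ 0) :
    ∃ x, euclNorm x = 1 ∧ euclNorm (M *ᵥ v) = euclNorm v * euclNorm (M *ᵥ x) := by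
  have hpos : 0 < euclNorm v := by
    rw [euclNorm_eq_norm_toLp, norm_pos_iff]
    simpa using hv
  refine ⟨(euclNorm v)⁻¹ • v, ?_, ?_⟩
  · rw [euclNorm_smul, abs_inv, abs_of_pos hpos, inv_mul_cancel₀ hpos.ne']
  · rw [mulVec_smul, euclNorm_smul, abs_inv, abs_of_pos hpos, mul_inv_cancel_left₀ hpos.ne']

lemma euclNorm_mulVec_le_frobNorm (M : Matrix ι κ ℝ) {x : κ → ℝ} (hx : euclNorm x = 1) :
    euclNorm (M *ᵥ x) ≤ frobNorm M := by
  have hx2 : ∑ l, x l ^ 2 = 1 := by rw [← euclNorm_sq, hx, one_pow]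
  refine Real.sqrt_le_sqrt (Finset.sum_le_sum fun i _ => ?_)
  calc (M *ᵥ x) i ^ 2 ≤ (∑ j, M i j ^ 2) * ∑ j, x j ^ 2 :=
        Finset.sum_mul_sq_le_sq_mul_sq _ _ _
    _ = ∑ j, M i j ^ 2 := by rw [hx2, mul_one]

lemma sigmaMin_nonneg (M : Matrix ι κ ℝ) : 0 ≤ sigmaMin M :=
  Real.sInf_nonneg (by rintro _ ⟨x, -, rfl⟩; exact euclNorm_nonneg _)

lemma sigmaMin_eq_zero_of_isEmpty [IsEmpty κ] (M : Matrix ι κ ℝ) : sigmaMin M = 0 := by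
  refine (congrArg sInf (Set.eq_empty_of_forall_notMem ?_)).trans Real.sInf_empty
  rintro _ ⟨x, hx, -⟩
  exact euclNorm_ne_one_of_isEmpty x hx

lemma euclNorm_mulVec_le_specNorm_mul (M : Matrix ι κ ℝ) (v : κ → ℝ) :
    euclNorm (M *ᵥ v) ≤ specNorm M * euclNorm v := by
  rcases eq_or_ne v 0 with rfl | hv
  · simp [euclNorm]
  obtain ⟨x, hx, hMv⟩ := exists_euclNorm_eq_one_mulVec_eq M hv
  have hbdd : BddAbove {r | ∃ x : κ → ℝ, euclNorm x = 1 ∧ r = euclNorm (M *ᵥ x)} :=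
    ⟨frobNorm M, by rintro _ ⟨y, hy, rfl⟩; exact euclNorm_mulVec_le_frobNorm M hy⟩
  rw [hMv, mul_comm]
  exact mul_le_mul_of_nonneg_right (le_csSup hbdd ⟨x, hx, rfl⟩) (euclNorm_nonneg v)

lemma sigmaMin_mul_le_euclNorm_mulVec (M : Matrix ι κ ℝ) (v : κ → ℝ) :
    sigmaMin M * euclNorm v ≤ euclNorm (M *ᵥ v) := by
  rcases eq_or_ne v 0 with rfl | hv
  · simp [euclNorm]
  obtain ⟨x, hx, hMv⟩ := exists_euclNorm_eq_one_mulVec_eq M hv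
  have hbdd : BddBelow {r | ∃ x : κ → ℝ, euclNorm x = 1 ∧ r = euclNorm (M *ᵥ x)} :=
    ⟨0, by rintro _ ⟨y, -, rfl⟩; exact euclNorm_nonneg _⟩
  rw [hMv, mul_comm]
  exact mul_le_mul_of_nonneg_left (csInf_le hbdd ⟨x, hx, rfl⟩) (euclNorm_nonneg v)

lemma specNorm_le_of_forall {M : Matrix ι κ ℝ} {c : ℝ} (hc : 0 ≤ c)
    (h : ∀ x, euclNorm (M *ᵥ x) ≤ c * euclNorm x) : specNorm M ≤ c :=
  Real.sSup_le (by rintro _ ⟨x, hx, rfl⟩; simpa [hx] using h x) hc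

lemma le_sigmaMin_of_forall [Nonempty κ] {M : Matrix ι κ ℝ} {c : ℝ}
    (h : ∀ x, c * euclNorm x ≤ euclNorm (M *ᵥ x)) : c ≤ sigmaMin M := by
  classical
  obtain ⟨l⟩ := ‹Nonempty κ›
  refine le_csInf ⟨_, Pi.single l 1, euclNorm_single l, rfl⟩ ?_
  rintro _ ⟨x, hx, rfl⟩
  simpa [hx] using h x

lemma sigmaMin_le_euclNorm_col (M : Matrix ι κ ℝ) (l : κ) : sigmaMin M ≤ euclNorm (M.col l) := by
  classical
  simpa [euclNorm_single, mulVec_single_one] using sigmaMin_mul_le_euclNorm_mulVec M (Pi.single l 1)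

lemma euclNorm_col_le_specNorm (M : Matrix ι κ ℝ) (l : κ) : euclNorm (M.col l) ≤ specNorm M := by
  classical
  simpa [euclNorm_single, mulVec_single_one] using
    euclNorm_mulVec_le_specNorm_mul M (Pi.single l 1)

end Norms

section KhatriRao

variable {ι κ : Type*} [Fintype ι] [Fintype κ]

lemma sum_euclNorm_sq_mul_row (U : Matrix ι κ ℝ) (x : κ → ℝ) :
    ∑ j, euclNorm (x * U j) ^ 2 = ∑ l, x l ^ 2 * euclNorm (U.col l) ^ 2 := by
  simp only [euclNorm_sq, Pi.mul_apply, col_apply, mul_pow, Finset.mul_sum]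
  exact Finset.sum_comm

lemma euclNorm_sq_mulVec_eq_sum_rows {U : Matrix ι κ ℝ} {A : Matrix (ι × ι) κ ℝ}
    (hA : ∀ i j l, A (i, j) l = U i l * U j l) (x : κ → ℝ) :
    euclNorm (A *ᵥ x) ^ 2 = ∑ j, euclNorm (U *ᵥ (x * U j)) ^ 2 := by
  simp only [euclNorm_sq, Fintype.sum_prod_type]
  rw [Finset.sum_comm]
  refine Finset.sum_congr rfl fun j _ => Finset.sum_congr rfl fun i _ => ?_
  simp only [mulVec, dotProduct, hA, Pi.mul_apply]
  congr 1
  exact Finset.sum_congr rfl fun l _ => by ring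

lemma sq_sigmaMin_mul_le_euclNorm_mulVec {U : Matrix ι κ ℝ} {A : Matrix (ι × ι) κ ℝ}
    (hA : ∀ i j l, A (i, j) l = U i l * U j l) (x : κ → ℝ) :
    sigmaMin U ^ 2 * euclNorm x ≤ euclNorm (A *ᵥ x) := by
  set s := sigmaMin U
  have hs : 0 ≤ s := sigmaMin_nonneg U
  refine le_of_pow_le_pow_left₀ two_ne_zero (euclNorm_nonneg _) ?_
  calc (s ^ 2 * euclNorm x) ^ 2 = s ^ 2 * ∑ l, x l ^ 2 * s ^ 2 := by
        rw [mul_pow, euclNorm_sq, ← Finset.sum_mul]; ring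
    _ ≤ s ^ 2 * ∑ l, x l ^ 2 * euclNorm (U.col l) ^ 2 := by
        gcongr with l; exact sigmaMin_le_euclNorm_col U l
    _ = ∑ j, (s * euclNorm (x * U j)) ^ 2 := by
        simp only [mul_pow, ← Finset.mul_sum, sum_euclNorm_sq_mul_row]
    _ ≤ ∑ j, euclNorm (U *ᵥ (x * U j)) ^ 2 := Finset.sum_le_sum fun j _ =>
        pow_le_pow_left₀ (mul_nonneg hs (euclNorm_nonneg _)) (sigmaMin_mul_le_euclNorm_mulVec U _) 2
    _ = euclNorm (A *ᵥ x) ^ 2 := (euclNorm_sq_mulVec_eq_sum_rows hA x).symm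

lemma euclNorm_mulVec_le_sq_specNorm_mul {U : Matrix ι κ ℝ} {A : Matrix (ι × ι) κ ℝ}
    (hA : ∀ i j l, A (i, j) l = U i l * U j l) (x : κ → ℝ) :
    euclNorm (A *ᵥ x) ≤ specNorm U ^ 2 * euclNorm x := by
  set S := specNorm U
  refine le_of_pow_le_pow_left₀ two_ne_zero (mul_nonneg (sq_nonneg S) (euclNorm_nonneg x)) ?_
  calc euclNorm (A *ᵥ x) ^ 2 = ∑ j, euclNorm (U *ᵥ (x * U j)) ^ 2 :=
        euclNorm_sq_mulVec_eq_sum_rows hA x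
    _ ≤ ∑ j, (S * euclNorm (x * U j)) ^ 2 := by
        gcongr with j
        · exact euclNorm_nonneg _
        · exact euclNorm_mulVec_le_specNorm_mul U _
    _ = S ^ 2 * ∑ l, x l ^ 2 * euclNorm (U.col l) ^ 2 := by
        simp only [mul_pow, ← Finset.mul_sum, sum_euclNorm_sq_mul_row]
    _ ≤ S ^ 2 * ∑ l, x l ^ 2 * S ^ 2 := by
        gcongr with l
        · exact euclNorm_nonneg _
        · exact euclNorm_col_le_specNorm U l
    _ = (S ^ 2 * euclNorm x) ^ 2 := by
        rw [mul_pow, euclNorm_sq, ← Finset.sum_mul]; ring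

end KhatriRao

/-- Schur-product lower bound: if `A ∈ ℝ^{k²×k}` has `i`-th column `vec(uᵢuᵢᵀ)` for the
columns `uᵢ` of `U ∈ ℝ^{k×k}`, then `σ_k(A) ≥ σ_k(U)²` and `‖A‖ ≤ σ_1(U)²`. -/
theorem stmt16 (k : ℕ) (U : Matrix (Fin k) (Fin k) ℝ)
    (A : Matrix (Fin k × Fin k) (Fin k) ℝ)
    (hA : ∀ i j l : Fin k, A (i, j) l = U i l * U j l) :
    sigmaMin U ^ 2 ≤ sigmaMin A ∧ specNorm A ≤ specNorm U ^ 2 := by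
  refine ⟨?_, specNorm_le_of_forall (sq_nonneg _) (euclNorm_mulVec_le_sq_specNorm_mul hA)⟩
  rcases isEmpty_or_nonempty (Fin k) with hk | hk
  · simp [sigmaMin_eq_zero_of_isEmpty]
  · exact le_sigmaMin_of_forall (sq_sigmaMin_mul_le_euclNorm_mulVec hA)
end
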